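/- arXiv:math/9201266 — 8 statements merged into one kernel-verified Lean document; each statement's English description precedes it below -/
import Mathlib

section
/- Let A be a symmetric n×n real matrix, let b ∈ ℝ^n with ‖b‖ = 1, and suppose the Krylov subspace K^j(A,b) has dimension j with j < n. Then for every v ∈ ℝ^n with v ∉ K^j(A,b) there exists a matrix Ã ∈ V̂(N_j(A,b)) such that ‖b − Ãv‖ > 1. -/
open Matrix

/-- Reinterpret a vector in `Fin n → ℝ` as an element of `ℝ^n` with the
Euclidean norm (the types are definitionally equal). -/
def toE {n : ℕ} (x : Fin n → ℝ) : EuclideanSpace ℝ (Fin n) := WithLp.toLp 2 x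

/-- The j-th Krylov subspace `K^j(A,b) = span {b, Ab, …, A^{j-1} b}` in `ℝ^n`
with the Euclidean norm. -/
noncomputable def krylov {n : ℕ} (A : Matrix (Fin n) (Fin n) ℝ)
    (b : EuclideanSpace ℝ (Fin n)) (j : ℕ) :
    Submodule ℝ (EuclideanSpace ℝ (Fin n)) :=
  Submodule.span ℝ {v | ∃ i < j, v = toE ((A ^ i).mulVec b)}

/-- `Ã` is indistinguishable from `A` by the Krylov information
`N_j(A,b) = (b, Ab, …, A^j b)`, i.e. `Ã ∈ V̂(N_j(A,b))`. -/
def indist {n : ℕ} (A Atil : Matrix (Fin n) (Fin n) ℝ)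
    (b : EuclideanSpace ℝ (Fin n)) (j : ℕ) : Prop :=
  ∀ i ≤ j, (Atil ^ i).mulVec b = (A ^ i).mulVec b

lemma rank1_mulVec {n : ℕ} (c : ℝ) (b w : EuclideanSpace ℝ (Fin n))
    (x : Fin n → ℝ) :
    toE ((Matrix.of fun i k => c * b i * w k).mulVec x)
      = (c * (inner ℝ w (toE x) : ℝ)) • b := by
  ext i
  show ∑ k, c * b i * w k * x k = (c * (inner ℝ w (toE x) : ℝ)) * b i
  simp only [PiLp.inner_apply, RCLike.inner_apply, starRingEnd_apply,
    star_trivial, toE, Finset.mul_sum, Finset.sum_mul]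
  apply Finset.sum_congr rfl
  intro k _
  ring

theorem stmt0 {n j : ℕ} (A : Matrix (Fin n) (Fin n) ℝ)
    (b : EuclideanSpace ℝ (Fin n)) (hA : A.IsSymm) (hb : ‖b‖ = 1)
    (hdim : Module.finrank ℝ (krylov A b j) = j) (hjn : j < n)
    (v : EuclideanSpace ℝ (Fin n)) (hv : v ∉ krylov A b j) :
    ∃ Atil : Matrix (Fin n) (Fin n) ℝ, indist A Atil b j ∧
      ‖b - toE (Atil.mulVec v)‖ > 1 := by
  classical
  set K := krylov A b j with hKdef
  set w : EuclideanSpace ℝ (Fin n) :=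
    v - (K.orthogonalProjectionOnto v : EuclideanSpace ℝ (Fin n)) with hw
  have hwK : w ∈ Kᗮ := K.sub_starProjection_mem_orthogonal v
  have hwne : w ≠ 0 := by
    intro h
    apply hv
    have hvp : v = (K.orthogonalProjectionOnto v : EuclideanSpace ℝ (Fin n)) := by
      rw [hw, sub_eq_zero] at h; exact h
    rw [hvp]; exact (K.orthogonalProjectionOnto v).2
  have hwn : (0:ℝ) < ‖w‖ ^ 2 := pow_pos (norm_pos_iff.mpr hwne) 2
  have hwv : (inner ℝ w v : ℝ) = ‖w‖ ^ 2 := by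
    have h1 : (inner ℝ w ((K.orthogonalProjectionOnto v : EuclideanSpace ℝ (Fin n))) : ℝ) = 0 := by
      have := (Submodule.mem_orthogonal K w).mp hwK
        (K.orthogonalProjectionOnto v : EuclideanSpace ℝ (Fin n))
        (K.orthogonalProjectionOnto v).2
      rwa [real_inner_comm] at this
    have h2 : v = w + (K.orthogonalProjectionOnto v : EuclideanSpace ℝ (Fin n)) := by
      rw [hw]; abel
    rw [h2, inner_add_right, h1, add_zero, real_inner_self_eq_norm_sq]
  set s : ℝ := 2 + ‖b - toE (A.mulVec v)‖ with hs
  have hspos : (0:ℝ) < s := by positivity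
  set c : ℝ := s / ‖w‖ ^ 2 with hc
  set Atil : Matrix (Fin n) (Fin n) ℝ :=
    A + Matrix.of (fun i k => c * b i * w k) with hAt
  have horth : ∀ i < j, (inner ℝ w (toE ((A ^ i).mulVec b)) : ℝ) = 0 := by
    intro i hi
    have hmem : toE ((A ^ i).mulVec b) ∈ K :=
      Submodule.subset_span ⟨i, hi, rfl⟩
    have := (Submodule.mem_orthogonal K w).mp hwK _ hmem
    rwa [real_inner_comm] at this
  have hmv : ∀ x : Fin n → ℝ,
      toE (Atil.mulVec x) = toE (A.mulVec x) + (c * (inner ℝ w (toE x) : ℝ)) • b := by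
    intro x
    have hadd : Atil.mulVec x
        = A.mulVec x + (Matrix.of fun i k => c * b i * w k).mulVec x := by
      rw [hAt, Matrix.add_mulVec]
    calc toE (Atil.mulVec x)
        = toE (A.mulVec x) + toE ((Matrix.of fun i k => c * b i * w k).mulVec x) := by
          rw [hadd]; exact WithLp.toLp_add 2 _ _
      _ = toE (A.mulVec x) + (c * (inner ℝ w (toE x) : ℝ)) • b := by
          rw [rank1_mulVec]
  refine ⟨Atil, ?_, ?_⟩
  · intro i hi
    induction i with
    | zero => simp
    | succ k ih =>
      have hk : k < j := lt_of_lt_of_le (Nat.lt_succ_self k) hi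
      have h1 : (Atil ^ (k+1)).mulVec b = Atil.mulVec ((A ^ k).mulVec b) := by
        rw [pow_succ', ← Matrix.mulVec_mulVec, ih (le_of_lt hk)]
      have h2 : (A ^ (k+1)).mulVec b = A.mulVec ((A ^ k).mulVec b) := by
        rw [pow_succ', ← Matrix.mulVec_mulVec]
      have h3 := hmv ((A ^ k).mulVec b)
      rw [horth k hk, mul_zero, zero_smul, add_zero] at h3
      rw [h1, h2]
      exact congrArg WithLp.ofLp h3
  · have hiv : (inner ℝ w (toE v) : ℝ) = ‖w‖ ^ 2 := hwv
    have hAv : toE (Atil.mulVec v) = toE (A.mulVec v) + s • b := by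
      rw [hmv, hiv, hc, div_mul_cancel₀ _ (ne_of_gt hwn)]
    have hsplit : b - toE (Atil.mulVec v)
        = (b - toE (A.mulVec v)) - s • b := by
      rw [hAv]; abel
    rw [hsplit]
    have h1 : ‖s • b‖ - ‖b - toE (A.mulVec v)‖
        ≤ ‖s • b - (b - toE (A.mulVec v))‖ :=
      norm_sub_norm_le _ _
    rw [show ‖s • b - (b - toE (A.mulVec v))‖
        = ‖(b - toE (A.mulVec v)) - s • b‖ from norm_sub_rev _ _] at h1
    have h2 : ‖s • b‖ = s := by
      rw [norm_smul, hb, mul_one, Real.norm_eq_abs, abs_of_pos hspos]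
    rw [h2] at h1
    have h3 : (1:ℝ) < s - ‖b - toE (A.mulVec v)‖ := by
      rw [hs]; linarith [norm_nonneg (b - toE (A.mulVec v))]
    linarith
end

section
/- Let A be a symmetric n×n real matrix, let b ∈ ℝ^n with ‖b‖ = 1, and suppose the Krylov subspace K^j(A,b) has dimension j with j < n. Then for every v ∈ ℝ^n with v ∉ K^j(A,b) and every real M > 0 there exists a symmetric matrix Ã ∈ V̂(N_j(A,b)) such that ‖b − Ãv‖ > M. -/
open Matrix RealInnerProductSpace

section Aux

variable {n : ℕ}

/-- Inverse reinterpretation. -/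
def ofE {n : ℕ} (x : EuclideanSpace ℝ (Fin n)) : Fin n → ℝ := x

lemma vecMulVec_mulVec' (w x : Fin n → ℝ) :
    (vecMulVec w w).mulVec x = (w ⬝ᵥ x) • w := by
  ext i
  simp [vecMulVec_apply, mulVec, dotProduct, Finset.mul_sum, Finset.sum_mul]
  exact Finset.sum_congr rfl fun j _ => by ring

lemma dot_eq_inner (w x : EuclideanSpace ℝ (Fin n)) :
    ofE w ⬝ᵥ ofE x = ⟪w, x⟫ := by
  simp [ofE, dotProduct, PiLp.inner_apply, RCLike.inner_apply, mul_comm]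

end Aux


theorem stmt1 {n j : ℕ} (A : Matrix (Fin n) (Fin n) ℝ)
    (b : EuclideanSpace ℝ (Fin n)) (hA : A.IsSymm) (hb : ‖b‖ = 1)
    (hdim : Module.finrank ℝ (krylov A b j) = j) (hjn : j < n)
    (v : EuclideanSpace ℝ (Fin n)) (hv : v ∉ krylov A b j)
    (M : ℝ) (hM : 0 < M) :
    ∃ Atil : Matrix (Fin n) (Fin n) ℝ, Atil.IsSymm ∧ indist A Atil b j ∧
      ‖b - toE (Atil.mulVec v)‖ > M := by

  classical
  set K := krylov A b j with hK
  set p : EuclideanSpace ℝ (Fin n) := (K.orthogonalProjectionOnto v : EuclideanSpace ℝ (Fin n)) with hp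
  set w : EuclideanSpace ℝ (Fin n) := v - p with hw
  have hwK : w ∈ Kᗮ := K.sub_starProjection_mem_orthogonal v
  have hwK' : ∀ x ∈ K, ⟪w, x⟫ = 0 := fun x hx => by
    rw [real_inner_comm]; exact hwK x hx
  have hwne : w ≠ 0 := by
    intro h
    apply hv
    have hvp : v = p := sub_eq_zero.mp h
    rw [hvp, hp]; exact (K.orthogonalProjectionOnto v).2
  have hwnorm : (0:ℝ) < ‖w‖ := norm_pos_iff.mpr hwne
  have hwv : ⟪w, v⟫ = ‖w‖ ^ 2 := by
    have h1 : ⟪w, v⟫ = ⟪w, w⟫ + ⟪w, p⟫ := by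
      rw [← inner_add_right]; congr 1; rw [hw]; abel
    rw [h1, hwK' p (by rw [hp]; exact (K.orthogonalProjectionOnto v).2),
      real_inner_self_eq_norm_sq, add_zero]
  have hdot : ∀ x : Fin n → ℝ, toE x ∈ K → ofE w ⬝ᵥ x = 0 := by
    intro x hx
    rw [show ofE w ⬝ᵥ x = ⟪w, toE x⟫ from dot_eq_inner w (toE x)]
    exact hwK' (toE x) hx
  have hKmem : ∀ i < j, toE ((A ^ i).mulVec b) ∈ K := fun i hi =>
    Submodule.subset_span ⟨i, hi, rfl⟩
  set c : ℝ := (M + ‖b - toE (A.mulVec v)‖ + 1) / ‖w‖ ^ 3 with hc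
  have hcpos : 0 < c := by apply div_pos <;> positivity
  set Atil : Matrix (Fin n) (Fin n) ℝ := A + c • vecMulVec (ofE w) (ofE w) with hAtil
  have hAtilmul : ∀ x : Fin n → ℝ, Atil.mulVec x
      = A.mulVec x + (c * (ofE w ⬝ᵥ x)) • ofE w := by
    intro x
    rw [hAtil, add_mulVec, smul_mulVec, vecMulVec_mulVec', smul_smul]
  refine ⟨Atil, ?_, ?_, ?_⟩
  · rw [Matrix.IsSymm, hAtil, transpose_add, transpose_smul, hA]
    congr 1
    ext i k
    simp [vecMulVec_apply, mul_comm]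
  · intro i hi
    induction i with
    | zero => simp
    | succ i ih =>
      have hij : i < j := lt_of_lt_of_le (Nat.lt_succ_self i) hi
      have ih' := ih hij.le
      rw [pow_succ', pow_succ', ← mulVec_mulVec, ← mulVec_mulVec, ih', hAtilmul,
        hdot _ (hKmem i hij), mul_zero, zero_smul, add_zero]
  · have hwdv : ofE w ⬝ᵥ ofE v = ‖w‖ ^ 2 := by
      rw [dot_eq_inner w v, hwv]
    have key : toE (Atil.mulVec (ofE v)) = toE (A.mulVec (ofE v)) + (c * ‖w‖ ^ 2) • w := by
      show toE (Atil.mulVec (ofE v)) = toE (A.mulVec (ofE v) + (c * ‖w‖ ^ 2) • ofE w)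
      rw [hAtilmul, hwdv]
    have key' : toE (Atil.mulVec v) = toE (A.mulVec v) + (c * ‖w‖ ^ 2) • w := key
    rw [key']
    have heq : b - (toE (A.mulVec v) + (c * ‖w‖ ^ 2) • w)
        = (b - toE (A.mulVec v)) - (c * ‖w‖ ^ 2) • w := by abel
    rw [heq]
    have h1 : ‖(c * ‖w‖ ^ 2) • w‖ - ‖b - toE (A.mulVec v)‖
        ≤ ‖(b - toE (A.mulVec v)) - (c * ‖w‖ ^ 2) • w‖ := by
      calc ‖(c * ‖w‖ ^ 2) • w‖ - ‖b - toE (A.mulVec v)‖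
          ≤ ‖(c * ‖w‖ ^ 2) • w - (b - toE (A.mulVec v))‖ :=
            norm_sub_norm_le _ _
        _ = ‖(b - toE (A.mulVec v)) - (c * ‖w‖ ^ 2) • w‖ := norm_sub_rev _ _
    have h2 : ‖(c * ‖w‖ ^ 2) • w‖ = c * ‖w‖ ^ 3 := by
      rw [norm_smul, Real.norm_eq_abs, abs_of_pos (by positivity)]
      ring
    have h3 : c * ‖w‖ ^ 3 = M + ‖b - toE (A.mulVec v)‖ + 1 := by
      rw [hc]; field_simp
    rw [h2, h3] at h1
    linarith
end

section
/- Let A be an arbitrary n×n real matrix (not necessarily symmetric), let b ∈ ℝ^n with ‖b‖ = 1, and suppose the Krylov subspace K^j(A,b) has dimension j with j < n. Then for every v ∈ ℝ^n with v ∉ K^j(A,b) and every real M > 0 there exists a matrix Ã ∈ V̂(N_j(A,b)) such that ‖b − Ãv‖ > M. -/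
open Matrix

theorem stmt3 {n j : ℕ} (A : Matrix (Fin n) (Fin n) ℝ)
    (b : EuclideanSpace ℝ (Fin n)) (hb : ‖b‖ = 1)
    (hdim : Module.finrank ℝ (krylov A b j) = j) (hjn : j < n)
    (v : EuclideanSpace ℝ (Fin n)) (hv : v ∉ krylov A b j)
    (M : ℝ) (hM : 0 < M) :
    ∃ Atil : Matrix (Fin n) (Fin n) ℝ, indist A Atil b j ∧
      ‖b - toE (Atil.mulVec v)‖ > M := by
  set K := krylov A b j with hK
  set u : EuclideanSpace ℝ (Fin n) := v - (K.orthogonalProjectionOnto v : EuclideanSpace ℝ (Fin n)) with hu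
  have huK : u ∈ Kᗮ := K.sub_starProjection_mem_orthogonal v
  have hune : u ≠ 0 := by
    intro h
    apply hv
    have : v = (K.orthogonalProjectionOnto v : EuclideanSpace ℝ (Fin n)) := by
      have := sub_eq_zero.mp h; exact this
    rw [this]; exact (K.orthogonalProjectionOnto v).2
  have hnu : (0:ℝ) < ‖u‖ ^ 2 := by
    have := norm_pos_iff.mpr hune
    positivity
  -- u is orthogonal (as dot product) to every element of K
  have hdot : ∀ x ∈ K, u ⬝ᵥ (x : Fin n → ℝ) = 0 := by
    intro x hx
    have h := (Submodule.mem_orthogonal K u).mp huK x hx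
    have : (inner ℝ x u : ℝ) = ∑ i, x i * u i := by
      simp [PiLp.inner_apply, RCLike.inner_apply, mul_comm]
    rw [this] at h
    simpa [dotProduct, mul_comm] using h
  have huv : u ⬝ᵥ (v : Fin n → ℝ) = ‖u‖ ^ 2 := by
    have hp : u ⬝ᵥ ((K.orthogonalProjectionOnto v : EuclideanSpace ℝ (Fin n)) : Fin n → ℝ) = 0 :=
      hdot _ (K.orthogonalProjectionOnto v).2
    have hself : u ⬝ᵥ (u : Fin n → ℝ) = ‖u‖ ^ 2 := by
      have h1 := real_inner_self_eq_norm_sq u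
      have h2 : (inner ℝ u u : ℝ) = u ⬝ᵥ (u : Fin n → ℝ) := by
        simp only [PiLp.inner_apply, RCLike.inner_apply, conj_trivial, dotProduct]
      rw [← h2, h1]
    have hvu : (v : Fin n → ℝ) = (toE u + toE ((K.orthogonalProjectionOnto v : EuclideanSpace ℝ (Fin n))) : EuclideanSpace ℝ (Fin n)) := by
      simp [hu, toE]
    rw [hvu]
    show u ⬝ᵥ ((u : Fin n → ℝ) + ((K.orthogonalProjectionOnto v : EuclideanSpace ℝ (Fin n)) : Fin n → ℝ)) = _
    rw [dotProduct_add, hp, hself, add_zero]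
  set c : ℝ := (M + 1 + ‖b - toE (A.mulVec v)‖) / ‖u‖ ^ 2 with hc
  set Atil : Matrix (Fin n) (Fin n) ℝ := A + c • vecMulVec (b : Fin n → ℝ) (u : Fin n → ℝ) with hA
  have hmul : ∀ x : Fin n → ℝ, Atil.mulVec x = A.mulVec x + (c * (u ⬝ᵥ x)) • (id b : Fin n → ℝ) := by
    intro x
    funext i
    simp only [hA, add_mulVec, smul_mulVec, Pi.add_apply, Pi.smul_apply, smul_eq_mul,
      vecMulVec, mulVec, dotProduct, of_apply]
    simp only [mul_add, Finset.sum_add_distrib, Finset.mul_sum, Finset.sum_mul]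
    rw [← Finset.sum_add_distrib]
    refine Finset.sum_congr rfl fun k _ => ?_
    simp only [Matrix.add_apply, Matrix.smul_apply, of_apply, smul_eq_mul, id]
    ring
  refine ⟨Atil, ?_, ?_⟩
  · intro i hi
    induction i with
    | zero => simp
    | succ i ih =>
      have hij : i < j := Nat.lt_of_succ_le hi
      have hmem : toE ((A ^ i).mulVec b) ∈ K := by
        exact Submodule.subset_span ⟨i, hij, rfl⟩
      have h0 : u ⬝ᵥ ((A ^ i).mulVec b) = 0 := hdot (toE _) hmem
      rw [pow_succ', pow_succ', ← Matrix.mulVec_mulVec, ← Matrix.mulVec_mulVec,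
        ih hij.le, hmul, h0, mul_zero, zero_smul, add_zero]
  · have hcc : c * (u ⬝ᵥ (v : Fin n → ℝ)) = M + 1 + ‖b - toE (A.mulVec v)‖ := by
      rw [huv, hc]; field_simp
    set s : ℝ := M + 1 + ‖b - toE (A.mulVec v)‖ with hs
    have hspos : M < s - ‖b - toE (A.mulVec v)‖ := by rw [hs]; linarith
    have key : toE (Atil.mulVec v) = toE (A.mulVec v) + s • b := by
      have h1 : Atil.mulVec v = A.mulVec v + (c * (u ⬝ᵥ (v : Fin n → ℝ))) • (id b : Fin n → ℝ) :=
        hmul v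
      rw [hcc] at h1
      rw [h1]; rfl
    rw [key]
    have hdiff : b - (toE (A.mulVec v) + s • b) = (b - toE (A.mulVec v)) - s • b := by abel
    rw [hdiff, norm_sub_rev]
    have hsb : ‖s • b‖ = s := by
      rw [norm_smul, hb, mul_one, Real.norm_eq_abs, abs_of_pos]
      rw [hs]; positivity
    have h2 := norm_sub_norm_le (s • b) (b - toE (A.mulVec v))
    rw [hsb] at h2
    linarith
end

section
/- Let A be an n×n real matrix, let b ∈ ℝ^n with ‖b‖ = 1, let 1 ≤ j and suppose the Krylov subspace K^{j+1}(A,b) has dimension j+1 with j+1 ≤ n. Then there exists an orthonormal basis q_1, …, q_n of ℝ^n such that q_1 = b, span{q_1, …, q_i} = K^i(A,b) for every 1 ≤ i ≤ j+1, ⟨q_l, A q_i⟩ = 0 for all 1 ≤ i ≤ j and all l ≥ j+1 with (l,i) ≠ (j+1,j), and ⟨q_{j+1}, A q_j⟩ ≠ 0. (In this basis A is represented by a block matrix whose lower-left (n−j)×j block is null except for a nonzero entry β in its top-right position.) -/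
open Matrix
open InnerProductSpace

lemma krylov_mono {n : ℕ} (A : Matrix (Fin n) (Fin n) ℝ)
    (b : EuclideanSpace ℝ (Fin n)) {m m' : ℕ} (h : m ≤ m') :
    krylov A b m ≤ krylov A b m' := by
  apply Submodule.span_mono
  rintro v ⟨i, hi, rfl⟩
  exact ⟨i, by omega, rfl⟩

lemma krylov_eq_range {n : ℕ} (A : Matrix (Fin n) (Fin n) ℝ)
    (b : EuclideanSpace ℝ (Fin n)) (m : ℕ) :
    krylov A b m = Submodule.span ℝ
      (Set.range fun i : Fin m => toE ((A ^ (i : ℕ)).mulVec b)) := by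
  unfold krylov
  congr 1
  ext x
  constructor
  · rintro ⟨i, hi, rfl⟩; exact ⟨⟨i, hi⟩, rfl⟩
  · rintro ⟨i, rfl⟩; exact ⟨i, i.2, rfl⟩

lemma mulVec_mem_krylov_succ {n : ℕ} {A : Matrix (Fin n) (Fin n) ℝ}
    {b : EuclideanSpace ℝ (Fin n)} {m : ℕ} {x : EuclideanSpace ℝ (Fin n)}
    (hx : x ∈ krylov A b m) : toE (A.mulVec x) ∈ krylov A b (m + 1) := by
  induction hx using Submodule.span_induction with
  | mem y hy =>
    obtain ⟨i, hi, rfl⟩ := hy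
    apply Submodule.subset_span
    refine ⟨i + 1, by omega, ?_⟩
    show toE (A.mulVec ((A ^ i).mulVec b)) = _
    rw [Matrix.mulVec_mulVec, ← pow_succ']
  | zero =>
    have : toE (A.mulVec (0 : EuclideanSpace ℝ (Fin n))) = 0 := by
      simp [toE, Matrix.mulVec_zero]
    rw [this]
    exact Submodule.zero_mem _
  | add y z hy hz hy' hz' =>
    have : toE (A.mulVec (y + z : EuclideanSpace ℝ (Fin n))) = toE (A.mulVec y) + toE (A.mulVec z) := by
      simp [toE, Matrix.mulVec_add]
    rw [this]; exact Submodule.add_mem _ hy' hz'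
  | smul c y hy hy' =>
    have : toE (A.mulVec (c • y : EuclideanSpace ℝ (Fin n))) = c • toE (A.mulVec y) := by
      simp [toE, Matrix.mulVec_smul]
    rw [this]; exact Submodule.smul_mem _ _ hy'

lemma inner_eq_zero_of_orthonormal_span {n : ℕ}
    {q : Fin n → EuclideanSpace ℝ (Fin n)} (hq : Orthonormal ℝ q)
    {S : Set (Fin n)} {l : Fin n} (hl : l ∉ S)
    {x : EuclideanSpace ℝ (Fin n)} (hx : x ∈ Submodule.span ℝ (q '' S)) :
    inner ℝ (q l) x = (0 : ℝ) := by
  induction hx using Submodule.span_induction with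
  | mem y hy =>
    obtain ⟨k, hk, rfl⟩ := hy
    exact hq.2 (fun h => hl (h ▸ hk))
  | zero => exact inner_zero_right _
  | add y z hy hz hy' hz' => rw [inner_add_right, hy', hz', add_zero]
  | smul c y hy hy' => rw [real_inner_smul_right, hy', mul_zero]

set_option maxHeartbeats 1000000 in
/-- Existence of a distinguished orthonormal basis adapted to the Krylov
subspaces, in which `A` is represented by a block matrix whose lower-left
`(n−j)×j` block vanishes except for a nonzero entry `β` in its top-right
position.  (Indices are 0-based: `q 0` plays the role of `q_1`.) -/
theorem stmt5 {n j : ℕ} (A : Matrix (Fin n) (Fin n) ℝ)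
    (b : EuclideanSpace ℝ (Fin n)) (hb : ‖b‖ = 1)
    (hj : 1 ≤ j) (hjn : j + 1 ≤ n)
    (hdim : Module.finrank ℝ (krylov A b (j + 1)) = j + 1) :
    ∃ q : Fin n → EuclideanSpace ℝ (Fin n),
      Orthonormal ℝ q ∧
      q ⟨0, by omega⟩ = b ∧
      (∀ i : ℕ, 1 ≤ i → i ≤ j + 1 →
        Submodule.span ℝ (q '' {l : Fin n | (l : ℕ) < i}) = krylov A b i) ∧
      (∀ l i : Fin n, (i : ℕ) < j → j ≤ (l : ℕ) →
        ¬((l : ℕ) = j ∧ (i : ℕ) + 1 = j) →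
        inner ℝ (q l) (toE (A.mulVec (q i))) = (0 : ℝ)) ∧
      inner ℝ (q ⟨j, by omega⟩) (toE (A.mulVec (q ⟨j - 1, by omega⟩))) ≠ (0 : ℝ) := by
  classical
  haveI : WellFoundedLT (Fin n) := inferInstance
  have hcard : Module.finrank ℝ (EuclideanSpace ℝ (Fin n)) = Fintype.card (Fin n) :=
    finrank_euclideanSpace
  set f : Fin n → EuclideanSpace ℝ (Fin n) :=
    fun l => toE ((A ^ (l : ℕ)).mulVec b) with hf
  -- linear independence of the first j+1 Krylov vectors
  have hw : LinearIndependent ℝ (fun i : Fin (j + 1) => toE ((A ^ (i : ℕ)).mulVec b)) := by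
    rw [linearIndependent_iff_card_eq_finrank_span, Fintype.card_fin]
    show j + 1 = Module.finrank ℝ (Submodule.span ℝ
      (Set.range fun i : Fin (j + 1) => toE ((A ^ (i : ℕ)).mulVec b)))
    rw [← krylov_eq_range, hdim]
  have hli : ∀ l : Fin n, (l : ℕ) ≤ j →
      LinearIndependent ℝ (f ∘ (Subtype.val : Set.Iic l → Fin n)) := by
    intro l hl
    have hb' : ∀ k : Set.Iic l, ((k : Fin n) : ℕ) < j + 1 := by
      intro k
      have h1 : ((k : Fin n) : ℕ) ≤ (l : ℕ) := Fin.le_def.mp k.2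
      omega
    have hinj : Function.Injective
        (fun k : Set.Iic l => (⟨((k : Fin n) : ℕ), hb' k⟩ : Fin (j + 1))) := by
      intro k₁ k₂ h
      simp only [Fin.mk.injEq] at h
      exact Subtype.ext (Fin.ext h)
    have hcomp := hw.comp _ hinj
    have heq : ((fun i : Fin (j + 1) => toE ((A ^ (i : ℕ)).mulVec b))
        ∘ fun k : Set.Iic l => (⟨((k : Fin n) : ℕ), hb' k⟩ : Fin (j + 1)))
        = f ∘ (Subtype.val : Set.Iic l → Fin n) := rfl
    rwa [heq] at hcomp
  have hgs0 : ∀ l : Fin n, (l : ℕ) ≤ j → gramSchmidt ℝ f l ≠ 0 :=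
    fun l hl => gramSchmidt_ne_zero_coe (𝕜 := ℝ) (f := f) l (hli l hl)
  have hgs : ∀ l : Fin n, (l : ℕ) ≤ j → gramSchmidtNormed ℝ f l ≠ 0 := by
    intro l hl
    unfold gramSchmidtNormed
    exact smul_ne_zero (inv_ne_zero (norm_ne_zero_iff.mpr (hgs0 l hl))) (hgs0 l hl)
  set Q := gramSchmidtOrthonormalBasis hcard f with hQ
  set q : Fin n → EuclideanSpace ℝ (Fin n) := fun l => Q l with hqdef
  have hq : ∀ l : Fin n, (l : ℕ) ≤ j → q l = gramSchmidtNormed ℝ f l :=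
    fun l hl => gramSchmidtOrthonormalBasis_apply hcard (hgs l hl)
  have hON : Orthonormal ℝ q := Q.orthonormal
  -- span property, including i = 0
  have hspan : ∀ i : ℕ, i ≤ j + 1 →
      Submodule.span ℝ (q '' {l : Fin n | (l : ℕ) < i}) = krylov A b i := by
    intro i hi
    rcases Nat.eq_zero_or_pos i with rfl | hi1
    · have h1 : {l : Fin n | (l : ℕ) < 0} = (∅ : Set (Fin n)) := by
        ext l; simp
      have h2 : {v : EuclideanSpace ℝ (Fin n) | ∃ k < 0, v = toE ((A ^ k).mulVec b)}
          = (∅ : Set _) := by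
        ext v; simp
      rw [h1]; unfold krylov; rw [h2]; simp
    · set c : Fin n := ⟨i - 1, by omega⟩ with hc
      have hset : {l : Fin n | (l : ℕ) < i} = Set.Iic c := by
        ext l
        simp only [Set.mem_setOf_eq, Set.mem_Iic, Fin.le_def, hc]
        omega
      have himg : q '' Set.Iic c = gramSchmidtNormed ℝ f '' Set.Iic c := by
        apply Set.image_congr
        intro l hl
        exact hq l (by have := Fin.le_def.mp hl; simp only [hc] at this; omega)
      rw [hset, himg, span_gramSchmidtNormed, span_gramSchmidt_Iic]
      unfold krylov
      congr 1
      ext x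
      constructor
      · rintro ⟨l, hl, rfl⟩
        have : (l : ℕ) ≤ i - 1 := Fin.le_def.mp hl
        exact ⟨(l : ℕ), by omega, rfl⟩
      · rintro ⟨k, hk, rfl⟩
        exact ⟨⟨k, by omega⟩, Fin.mk_le_mk.mpr (by omega), rfl⟩
  -- q 0 = b
  have hfz : f ⟨0, by omega⟩ = b := by
    show toE ((A ^ ((⟨0, by omega⟩ : Fin n) : ℕ)).mulVec b) = b
    show toE ((A ^ 0).mulVec b) = b
    rw [pow_zero]
    simp [toE, Matrix.one_mulVec]
  have hq0 : q ⟨0, by omega⟩ = b := by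
    rw [hq ⟨0, by omega⟩ (by simp)]
    have hIio : Finset.Iio (⟨0, by omega⟩ : Fin n) = ∅ := by
      ext l; simp [Fin.lt_def]
    have hg0 : gramSchmidt ℝ f ⟨0, by omega⟩ = b := by
      rw [gramSchmidt_def, hIio, Finset.sum_empty, sub_zero, hfz]
    rw [gramSchmidtNormed, hg0, hb]
    simp
  refine ⟨q, hON, hq0, ?_, ?_, ?_⟩
  · intro i _ hi2
    exact hspan i hi2
  · -- orthogonality
    intro l i hij hjl hne
    have hqi : q i ∈ krylov A b ((i : ℕ) + 1) := by
      rw [← hspan ((i : ℕ) + 1) (by omega)]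
      exact Submodule.subset_span ⟨i, by simp, rfl⟩
    have hAqi : toE (A.mulVec (q i)) ∈ krylov A b ((i : ℕ) + 2) :=
      mulVec_mem_krylov_succ hqi
    by_cases hcase : (i : ℕ) + 1 < j
    · have hx : toE (A.mulVec (q i)) ∈ krylov A b j :=
        krylov_mono A b (by omega) hAqi
      rw [← hspan j (by omega)] at hx
      exact inner_eq_zero_of_orthonormal_span hON
        (by simp only [Set.mem_setOf_eq]; omega) hx
    · have hlj : j + 1 ≤ (l : ℕ) := by
        rcases Nat.lt_or_ge (j : ℕ) (l : ℕ) with h | h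
        · omega
        · exfalso; exact hne ⟨by omega, by omega⟩
      have hx : toE (A.mulVec (q i)) ∈ krylov A b (j + 1) :=
        krylov_mono A b (by omega) hAqi
      rw [← hspan (j + 1) le_rfl] at hx
      exact inner_eq_zero_of_orthonormal_span hON
        (by simp only [Set.mem_setOf_eq]; omega) hx
  · -- nonvanishing
    intro h0
    set jm : Fin n := ⟨j - 1, by omega⟩ with hjm
    set jf : Fin n := ⟨j, by omega⟩ with hjf
    set x : EuclideanSpace ℝ (Fin n) := toE (A.mulVec (q jm)) with hx
    have hqjm : q jm ∈ krylov A b j := by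
      rw [← hspan j (by omega)]
      exact Submodule.subset_span ⟨jm, by simp [hjm]; omega, rfl⟩
    have hxj1 : x ∈ krylov A b (j + 1) := by
      have := mulVec_mem_krylov_succ hqjm
      exact this
    -- x is in krylov j since its jf-component vanishes
    have hxj : x ∈ krylov A b j := by
      have hs := Q.sum_repr x
      have hzero : ∀ l : Fin n, j ≤ (l : ℕ) → Q.repr x l = 0 := by
        intro l hl
        rw [Q.repr_apply_apply]
        rcases eq_or_lt_of_le hl with h | h
        · have : l = jf := Fin.ext (show (l : ℕ) = j by omega)
          rw [this]
          exact h0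
        · have hx' := hxj1
          rw [← hspan (j + 1) le_rfl] at hx'
          exact inner_eq_zero_of_orthonormal_span hON
            (by simp only [Set.mem_setOf_eq]; omega) hx'
      rw [← hs]
      apply Submodule.sum_mem
      intro l _
      by_cases hlj : (l : ℕ) < j
      · apply Submodule.smul_mem
        rw [← hspan j (by omega)]
        exact Submodule.subset_span ⟨l, hlj, rfl⟩
      · rw [hzero l (by omega), zero_smul]
        exact Submodule.zero_mem _
    -- q jm is not in krylov (j-1)
    have hnotmem : q jm ∉ krylov A b (j - 1) := by
      intro hmem
      rw [← hspan (j - 1) (by omega)] at hmem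
      have h1 := inner_eq_zero_of_orthonormal_span hON
        (S := {l : Fin n | (l : ℕ) < j - 1}) (l := jm)
        (by simp only [Set.mem_setOf_eq, hjm]; omega) hmem
      have h2 : inner ℝ (q jm) (q jm) = (1 : ℝ) := by
        rw [real_inner_self_eq_norm_sq, hON.1 jm]
        norm_num
      rw [h1] at h2
      norm_num at h2
    -- split krylov j
    have hsplit : krylov A b j = krylov A b (j - 1) ⊔
        Submodule.span ℝ {toE ((A ^ (j - 1)).mulVec b)} := by
      unfold krylov
      rw [← Submodule.span_union]
      congr 1
      ext v
      simp only [Set.mem_setOf_eq, Set.mem_union, Set.mem_singleton_iff]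
      constructor
      · rintro ⟨i, hi, rfl⟩
        rcases Nat.lt_or_ge i (j - 1) with h | h
        · exact Or.inl ⟨i, h, rfl⟩
        · have : i = j - 1 := by omega
          exact Or.inr (by rw [this])
      · rintro (⟨i, hi, rfl⟩ | rfl)
        · exact ⟨i, by omega, rfl⟩
        · exact ⟨j - 1, by omega, rfl⟩
    have hqjm' := hqjm
    rw [hsplit, Submodule.mem_sup] at hqjm'
    obtain ⟨y, hy, z, hz, hyz⟩ := hqjm'
    rw [Submodule.mem_span_singleton] at hz
    obtain ⟨c, rfl⟩ := hz
    have hc : c ≠ 0 := by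
      rintro rfl
      rw [zero_smul, add_zero] at hyz
      exact hnotmem (hyz ▸ hy)
    have hAy : toE (A.mulVec y) ∈ krylov A b j := by
      have := mulVec_mem_krylov_succ hy
      have heq : j - 1 + 1 = j := by omega
      rwa [heq] at this
    have hAv : A.mulVec (toE ((A ^ (j - 1)).mulVec b)) = (A ^ j).mulVec b := by
      show A.mulVec ((A ^ (j - 1)).mulVec b) = _
      have hj1 : j - 1 + 1 = j := by omega
      rw [Matrix.mulVec_mulVec, ← pow_succ', hj1]
    have hdecomp : x = toE (A.mulVec y) + c • toE ((A ^ j).mulVec b) := by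
      rw [hx, ← hyz]
      show toE (A.mulVec (y + c • toE ((A ^ (j - 1)).mulVec b))) = _
      rw [Matrix.mulVec_add, Matrix.mulVec_smul, hAv]
      simp only [toE, WithLp.toLp_add, WithLp.toLp_smul]
    have hvj : toE ((A ^ j).mulVec b) ∈ krylov A b j := by
      have h1 : c • toE ((A ^ j).mulVec b) = x - toE (A.mulVec y) := by
        rw [hdecomp]; abel
      have h2 : c • toE ((A ^ j).mulVec b) ∈ krylov A b j := by
        rw [h1]; exact Submodule.sub_mem _ hxj hAy
      have h3 := Submodule.smul_mem _ c⁻¹ h2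
      rwa [smul_smul, inv_mul_cancel₀ hc, one_smul] at h3
    have hle : krylov A b (j + 1) ≤ krylov A b j := by
      rw [show krylov A b (j + 1)
        = Submodule.span ℝ {v | ∃ i < j + 1, v = toE ((A ^ i).mulVec b)} from rfl]
      rw [Submodule.span_le]
      rintro v ⟨i, hi, rfl⟩
      rcases Nat.lt_or_ge i j with h | h
      · exact Submodule.subset_span ⟨i, h, rfl⟩
      · have : i = j := by omega
        rw [this]; exact hvj
    have h1 : Module.finrank ℝ (krylov A b (j + 1))
        ≤ Module.finrank ℝ (krylov A b j) := Submodule.finrank_mono hle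
    have h2 : Module.finrank ℝ (krylov A b j) ≤ j := by
      rw [krylov_eq_range]
      have := finrank_range_le_card (R := ℝ)
        (fun i : Fin j => toE ((A ^ (i : ℕ)).mulVec b))
      simpa [Set.finrank, Fintype.card_fin] using this
    omega
end

section
/- Let A be an n×n real matrix, b ∈ ℝ^n, and j ≥ 0. Let w ∈ ℝ^n be a nonzero vector orthogonal to the Krylov subspace K^{j+1}(A,b), and let H = I − 2wwᵀ/‖w‖² be the Householder reflection that reverses w. Then HAH ∈ V̂(N_j(A,b)); that is, (HAH)^i b = A^i b for all 0 ≤ i ≤ j. -/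
open Matrix

/-- If `w ≠ 0` is orthogonal to the Krylov subspace `K^{j+1}(A,b)` and
`H = I − 2wwᵀ/‖w‖²` is the Householder reflection that reverses `w`, then
`HAH` is indistinguishable from `A` by the information `N_j(A,b)`. -/
theorem stmt6 {n j : ℕ} (A : Matrix (Fin n) (Fin n) ℝ)
    (b : EuclideanSpace ℝ (Fin n)) (w : EuclideanSpace ℝ (Fin n))
    (hw : w ≠ 0) (horth : ∀ x ∈ krylov A b (j + 1), inner ℝ w x = (0 : ℝ))
    (H : Matrix (Fin n) (Fin n) ℝ)
    (hH : H = 1 - (2 / ‖w‖ ^ 2) • Matrix.vecMulVec w w) :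
    indist A (H * A * H) b j := by
  have hfix : ∀ x : EuclideanSpace ℝ (Fin n), x ∈ krylov A b (j + 1) →
      H.mulVec x = x := by
    intro x hx
    have h : w ⬝ᵥ (x : Fin n → ℝ) = 0 := by
      simpa [PiLp.inner_apply, dotProduct, mul_comm] using horth x hx
    subst hH
    ext i
    simp only [Matrix.sub_mulVec, Matrix.smul_mulVec, Matrix.one_mulVec,
      Pi.sub_apply, Pi.smul_apply, smul_eq_mul]
    have hv : (Matrix.vecMulVec w w).mulVec x i = w i * (w ⬝ᵥ (x : Fin n → ℝ)) := by
      simp [Matrix.mulVec, Matrix.vecMulVec, dotProduct, Finset.mul_sum, mul_assoc]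
    rw [hv, h]; ring
  have hmem : ∀ m, m < j + 1 → toE ((A ^ m).mulVec b) ∈ krylov A b (j + 1) := by
    intro m hm
    exact Submodule.subset_span ⟨m, hm, rfl⟩
  intro i hi
  induction i with
  | zero => simp
  | succ k ih =>
    have hk : k ≤ j := Nat.le_of_succ_le hi
    have ihk := ih hk
    have h1 : H.mulVec ((A ^ k).mulVec b) = (A ^ k).mulVec b :=
      by simpa [toE] using hfix _ (hmem k (Nat.lt_succ_of_le hk))
    have h2 : H.mulVec ((A ^ (k + 1)).mulVec b) = (A ^ (k + 1)).mulVec b :=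
      by simpa [toE] using hfix _ (hmem (k + 1) (Nat.lt_succ_of_le hi))
    calc ((H * A * H) ^ (k + 1)).mulVec b
        = (H * A * H).mulVec (((H * A * H) ^ k).mulVec b) := by
          rw [pow_succ', Matrix.mulVec_mulVec]
      _ = H.mulVec (A.mulVec (H.mulVec ((A ^ k).mulVec b))) := by
          rw [ihk, ← Matrix.mulVec_mulVec, ← Matrix.mulVec_mulVec]
      _ = (A ^ (k + 1)).mulVec b := by
          rw [h1, Matrix.mulVec_mulVec b A (A ^ k), ← pow_succ', h2]
end

section
/- Let A be an n×n real matrix, b ∈ ℝ^n, ε ≥ 0, and j ≥ 0. Suppose y ∈ ℝ^n satisfies ‖b − Ãy‖ ≤ ε‖b‖ for every Ã ∈ V̂(N_j(A,b)). Then the orthogonal projection z of y onto the Krylov subspace K^{j+1}(A,b) satisfies ‖b − Ãz‖ ≤ ε‖b‖ for every Ã ∈ V̂(N_j(A,b)). -/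
open Matrix

lemma inner_eq_dot {n : ℕ} (x y : EuclideanSpace ℝ (Fin n)) :
    (inner ℝ x y : ℝ) = (x : Fin n → ℝ) ⬝ᵥ (y : Fin n → ℝ) := by
  simp [PiLp.inner_apply, dotProduct, RCLike.inner_apply, mul_comm]

lemma vmv_mulVec {n : ℕ} (w x : Fin n → ℝ) :
    (Matrix.vecMulVec w w).mulVec x = (w ⬝ᵥ x) • w := by
  funext i
  simp only [Matrix.mulVec, Matrix.vecMulVec, dotProduct, Pi.smul_apply,
    smul_eq_mul, Matrix.of_apply, Finset.sum_mul]
  exact Finset.sum_congr rfl fun k _ => by ring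

/-- If `y` achieves an `ε`-residual for every matrix indistinguishable from
`A` by `N_j(A,b)`, then so does the orthogonal projection of `y` onto the
Krylov subspace `K^{j+1}(A,b)`. -/
theorem stmt8 {n j : ℕ} (A : Matrix (Fin n) (Fin n) ℝ)
    (b : EuclideanSpace ℝ (Fin n)) (ε : ℝ) (hε : 0 ≤ ε)
    (y : EuclideanSpace ℝ (Fin n))
    (hy : ∀ Atil : Matrix (Fin n) (Fin n) ℝ, indist A Atil b j →
      ‖b - toE (Atil.mulVec y)‖ ≤ ε * ‖b‖) :
    ∀ Atil : Matrix (Fin n) (Fin n) ℝ, indist A Atil b j →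
      ‖b - toE (Atil.mulVec
        ((Submodule.orthogonalProjectionOnto (krylov A b (j + 1)) y : krylov A b (j + 1)) :
          EuclideanSpace ℝ (Fin n)))‖ ≤ ε * ‖b‖ := by
  intro Atil hAtil
  set K := krylov A b (j + 1) with hK
  set z : EuclideanSpace ℝ (Fin n) := (Submodule.orthogonalProjectionOnto K y : EuclideanSpace ℝ (Fin n))
    with hz
  set w : EuclideanSpace ℝ (Fin n) := y - z with hwdef
  have hzK : z ∈ K := (Submodule.orthogonalProjectionOnto K y).2
  have hwK : w ∈ Kᗮ := K.sub_starProjection_mem_orthogonal y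
  by_cases hw : w = 0
  · have hzy : z = y := by
      have h0 : y - z = 0 := hw
      linear_combination (norm := module) -h0
    rw [hzy]
    exact hy Atil hAtil
  · set wf : Fin n → ℝ := WithLp.ofLp w with hwf
    have hgen : ∀ i ≤ j, toE ((A ^ i).mulVec b) ∈ K := fun i hi =>
      Submodule.subset_span ⟨i, Nat.lt_succ_of_le hi, rfl⟩
    have hwdot : ∀ i ≤ j, wf ⬝ᵥ (A ^ i).mulVec b = 0 := by
      intro i hi
      have h1 := hwK _ (hgen i hi)
      rw [real_inner_comm] at h1
      exact (inner_eq_dot w (toE ((A ^ i).mulVec b))).symm.trans h1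
    set c : ℝ := (‖w‖ ^ 2)⁻¹ with hc
    set M : Matrix (Fin n) (Fin n) ℝ := Atil * (1 - c • Matrix.vecMulVec wf wf) with hM
    have hMv : ∀ x : Fin n → ℝ,
        M.mulVec x = Atil.mulVec (x - (c * (wf ⬝ᵥ x)) • wf) := by
      intro x
      rw [hM, ← Matrix.mulVec_mulVec]
      congr 1
      rw [Matrix.sub_mulVec, Matrix.one_mulVec, Matrix.smul_mulVec, vmv_mulVec,
        smul_smul]
    have hMA : indist A M b j := by
      intro i hi
      induction i with
      | zero => simp
      | succ k ih =>
        have hk : k ≤ j := Nat.le_of_succ_le hi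
        rw [pow_succ', ← Matrix.mulVec_mulVec, ih hk, hMv, hwdot k hk, mul_zero, zero_smul,
          sub_zero, ← hAtil k hk, Matrix.mulVec_mulVec, ← pow_succ', hAtil _ hi]
    have hMy : M.mulVec y = Atil.mulVec z := by
      have hwy : wf ⬝ᵥ (y : Fin n → ℝ) = ‖w‖ ^ 2 := by
        have hzw : (inner ℝ z w : ℝ) = 0 := hwK z hzK
        rw [real_inner_comm] at hzw
        have h2 : (inner ℝ w y : ℝ) = inner ℝ w z + (inner ℝ w w : ℝ) := by
          rw [← inner_add_right]
          congr 1
          linear_combination (norm := module) hwdef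
        exact (inner_eq_dot w y).symm.trans
          (h2.trans (by rw [hzw, zero_add, real_inner_self_eq_norm_sq]))
      rw [hMv, hwy, hc, inv_mul_cancel₀ (pow_pos (norm_pos_iff.mpr hw) 2).ne', one_smul]
      have h4 : y - w = z := by rw [hwdef]; exact sub_sub_cancel y z
      rw [← h4, WithLp.ofLp_sub]
    have hfin := hy M hMA
    rw [hMy] at hfin
    exact hfin
end

section
/- Let F be a set of n×n real matrices that is orthogonally invariant, i.e., QÃQᵀ ∈ F for every Ã ∈ F and every orthogonal n×n matrix Q. Let A ∈ F, b ∈ ℝ^n, ε ≥ 0, and j ≥ 0. Suppose y ∈ ℝ^n satisfies ‖b − Ãy‖ ≤ ε‖b‖ for every Ã ∈ V̂(N_j(A,b)) ∩ F. Then the orthogonal projection z of y onto the Krylov subspace K^{j+1}(A,b) satisfies ‖b − Ãz‖ ≤ ε‖b‖ for every Ã ∈ V̂(N_j(A,b)) ∩ F. -/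
open Matrix

lemma toE_mulVec {n : ℕ} (M : Matrix (Fin n) (Fin n) ℝ) (x : Fin n → ℝ) :
    toE (M.mulVec x) = Matrix.toEuclideanLin M (toE x) := rfl

lemma toE_inj {n : ℕ} {u v : Fin n → ℝ} (h : toE u = toE v) : u = v :=
  congrArg WithLp.ofLp h

lemma toE_eq {n : ℕ} (y : EuclideanSpace ℝ (Fin n)) : toE y = y := rfl

/-- Version of the projection theorem relative to an orthogonally invariant
class `F` of matrices. -/
theorem stmt9 {n j : ℕ} (F : Set (Matrix (Fin n) (Fin n) ℝ))
    (hF : ∀ Atil ∈ F, ∀ Q : Matrix (Fin n) (Fin n) ℝ,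
      Q * Qᵀ = 1 → Q * Atil * Qᵀ ∈ F)
    (A : Matrix (Fin n) (Fin n) ℝ) (hAF : A ∈ F)
    (b : EuclideanSpace ℝ (Fin n)) (ε : ℝ) (hε : 0 ≤ ε)
    (y : EuclideanSpace ℝ (Fin n))
    (hy : ∀ Atil : Matrix (Fin n) (Fin n) ℝ, indist A Atil b j → Atil ∈ F →
      ‖b - toE (Atil.mulVec y)‖ ≤ ε * ‖b‖) :
    ∀ Atil : Matrix (Fin n) (Fin n) ℝ, indist A Atil b j → Atil ∈ F →
      ‖b - toE (Atil.mulVec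
        ((Submodule.orthogonalProjectionOnto (krylov A b (j + 1)) y : krylov A b (j + 1)) :
          EuclideanSpace ℝ (Fin n)))‖ ≤ ε * ‖b‖ := by
  intro Atil hind hAtilF
  set K := krylov A b (j + 1) with hKdef
  set R := K.reflection with hRdef
  set Q : Matrix (Fin n) (Fin n) ℝ :=
    Matrix.toEuclideanLin.symm (R.toLinearEquiv.toLinearMap) with hQdef
  -- action of Q
  have hQlin : Matrix.toEuclideanLin Q = R.toLinearEquiv.toLinearMap := by
    rw [hQdef, LinearEquiv.apply_symm_apply]
  have hQv : ∀ x : Fin n → ℝ, toE (Q.mulVec x) = R (toE x) := by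
    intro x
    rw [toE_mulVec, hQlin]; rfl
  -- membership of the Krylov vectors
  have hmem : ∀ i ≤ j, toE ((A ^ i).mulVec b) ∈ K := by
    intro i hi
    exact Submodule.subset_span ⟨i, Nat.lt_succ_of_le hi, rfl⟩
  have hbK : b ∈ K := by
    have := hmem 0 (Nat.zero_le j)
    simpa [pow_zero, Matrix.one_mulVec, toE] using this
  have hRb : R b = b := K.reflection_mem_subspace_eq_self hbK
  -- Q is symmetric
  have hQsym : Qᵀ = Q := by
    have hherm : Q.IsHermitian := by
      rw [Matrix.isHermitian_iff_isSymmetric]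
      intro u v
      rw [hQlin]
      show (inner ℝ (R u) v : ℝ) = inner ℝ u (R v)
      calc (inner ℝ (R u) v : ℝ) = inner ℝ (R (R u)) (R v) :=
            (R.inner_map_map (R u) v).symm
        _ = inner ℝ u (R v) := by rw [K.reflection_reflection]
    calc Qᵀ = Qᴴ := (Matrix.conjTranspose_eq_transpose_of_trivial Q).symm
      _ = Q := hherm
  -- Q * Q = 1
  have hQQ : Q * Q = 1 := by
    apply Matrix.toEuclideanLin.injective
    apply LinearMap.ext
    intro x
    have h1 : toE ((Q * Q).mulVec x) = toE x := by
      rw [← Matrix.mulVec_mulVec, hQv, hQv, hRdef, K.reflection_reflection]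
    calc Matrix.toEuclideanLin (Q * Q) x = toE ((Q * Q).mulVec x) := rfl
      _ = toE x := h1
      _ = Matrix.toEuclideanLin 1 x := by
          rw [show Matrix.toEuclideanLin (1 : Matrix (Fin n) (Fin n) ℝ) x
            = toE ((1 : Matrix (Fin n) (Fin n) ℝ).mulVec x) from rfl,
            Matrix.one_mulVec, toE_eq]
  have hQorth : Q * Qᵀ = 1 := by rw [hQsym]; exact hQQ
  -- the conjugated matrix
  set Atil' : Matrix (Fin n) (Fin n) ℝ := Q * Atil * Q with hA'def
  have hA'F : Atil' ∈ F := by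
    have := hF Atil hAtilF Q hQorth
    rwa [hQsym] at this
  -- powers of Atil'
  have hpow : ∀ i : ℕ, Atil' ^ i = Q * Atil ^ i * Q := by
    intro i
    induction i with
    | zero => simp [hQQ]
    | succ k ih =>
        rw [pow_succ, ih, hA'def, pow_succ]
        have e : Q * Atil ^ k * Q * (Q * Atil * Q)
            = Q * Atil ^ k * (Q * Q) * (Atil * Q) := by noncomm_ring
        rw [e, hQQ, mul_one]
        noncomm_ring
  -- Atil' is indistinguishable
  have hind' : indist A Atil' b j := by
    intro i hi
    rw [hpow i]
    apply toE_inj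
    have h1 : toE ((Q * Atil ^ i * Q).mulVec b)
        = R (toE ((Atil ^ i).mulVec (Q.mulVec b))) := by
      rw [← Matrix.mulVec_mulVec, ← Matrix.mulVec_mulVec, hQv]
    rw [h1]
    have hQb : toE (Q.mulVec b) = b := by rw [hQv]; exact hRb
    have hQb' : Q.mulVec b = b := toE_inj hQb
    rw [hQb', hind i hi]
    show R (toE ((A ^ i).mulVec b)) = toE ((A ^ i).mulVec b)
    exact K.reflection_mem_subspace_eq_self (hmem i hi)
  -- the two hypotheses
  have h1 := hy Atil hind hAtilF
  have h2 := hy Atil' hind' hA'F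
  -- rewrite h2 : ‖b - Atil' y‖ = ‖b - Atil (R y)‖
  have hRy : toE (Atil'.mulVec y) = R (toE (Atil.mulVec (Q.mulVec y))) := by
    rw [hA'def, ← Matrix.mulVec_mulVec, ← Matrix.mulVec_mulVec, hQv]
  have h2' : ‖b - toE (Atil.mulVec (Q.mulVec y))‖ ≤ ε * ‖b‖ := by
    rw [hRy] at h2
    calc ‖b - toE (Atil.mulVec (Q.mulVec y))‖
        = ‖R (b - toE (Atil.mulVec (Q.mulVec y)))‖ := (R.norm_map _).symm
      _ = ‖R b - R (toE (Atil.mulVec (Q.mulVec y)))‖ := by rw [map_sub]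
      _ = ‖b - R (toE (Atil.mulVec (Q.mulVec y)))‖ := by rw [hRb]
      _ ≤ ε * ‖b‖ := h2
  -- the projection z
  set z : EuclideanSpace ℝ (Fin n) :=
    ((K.orthogonalProjectionOnto y : K) : EuclideanSpace ℝ (Fin n)) with hzdef
  have hry : R y = z + z - y := by
    rw [hRdef, K.reflection_apply, K.starProjection_apply, two_smul ℕ, ← hzdef]
  have key : b - toE (Atil.mulVec z)
      = (2 : ℝ)⁻¹ • ((b - toE (Atil.mulVec y))
        + (b - toE (Atil.mulVec (Q.mulVec y)))) := by
    have e1 : toE (Atil.mulVec z) = Matrix.toEuclideanLin Atil z := rfl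
    have e2 : toE (Atil.mulVec y)
        = Matrix.toEuclideanLin Atil (toE y) := rfl
    have e3 : toE (Atil.mulVec (Q.mulVec y))
        = Matrix.toEuclideanLin Atil (toE (Q.mulVec y)) := rfl
    rw [e1, e2, e3, hQv, toE_eq y, hry, map_sub, map_add]
    module
  rw [key, norm_smul]
  have htri : ‖(b - toE (Atil.mulVec y))
      + (b - toE (Atil.mulVec (Q.mulVec y)))‖
      ≤ ‖b - toE (Atil.mulVec y)‖ + ‖b - toE (Atil.mulVec (Q.mulVec y))‖ :=
    norm_add_le _ _
  have hn : ‖(2 : ℝ)⁻¹‖ = (2 : ℝ)⁻¹ := by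
    rw [Real.norm_eq_abs]; norm_num
  rw [hn]
  nlinarith [norm_nonneg (b - toE (Atil.mulVec y)),
    norm_nonneg (b - toE (Atil.mulVec (Q.mulVec y)))]
end

section
/- Let A be an n×n real matrix, b ∈ ℝ^n, ε ≥ 0, and j ≥ 0. If there exists y ∈ ℝ^n such that ‖b − Ãy‖ ≤ ε‖b‖ for every Ã ∈ V̂(N_j(A,b)), then there exists x ∈ K^{j+1}(A,b) with ‖b − Ax‖ ≤ ε‖b‖; in particular, the minimum of ‖b − Ax‖ over x ∈ K^{j+1}(A,b) (the residual of the minimal residual (MR) approximation from K^{j+1}(A,b)) is at most ε‖b‖. Thus MR lags at most one step behind any procedure that achieves an ε-residual for all matrices indistinguishable from A by N_j(A,b). -/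
open Matrix

/-- If some vector `y` achieves an `ε`-residual for all matrices
indistinguishable from `A` by `N_j(A,b)`, then some vector in the Krylov
subspace `K^{j+1}(A,b)` achieves an `ε`-residual for `A` itself; in
particular the minimal residual over `K^{j+1}(A,b)` is at most `ε‖b‖`. -/
theorem stmt10 {n j : ℕ} (A : Matrix (Fin n) (Fin n) ℝ)
    (b : EuclideanSpace ℝ (Fin n)) (ε : ℝ) (hε : 0 ≤ ε)
    (hy : ∃ y : EuclideanSpace ℝ (Fin n),
      ∀ Atil : Matrix (Fin n) (Fin n) ℝ, indist A Atil b j →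
        ‖b - toE (Atil.mulVec y)‖ ≤ ε * ‖b‖) :
    (∃ x ∈ krylov A b (j + 1), ‖b - toE (A.mulVec x)‖ ≤ ε * ‖b‖) ∧
      sInf {r : ℝ | ∃ x ∈ krylov A b (j + 1), r = ‖b - toE (A.mulVec x)‖} ≤
        ε * ‖b‖ := by
  classical
  obtain ⟨y, hy⟩ := hy
  set K : Submodule ℝ (EuclideanSpace ℝ (Fin n)) := krylov A b j with hKdef
  haveI : CompleteSpace K := FiniteDimensional.complete ℝ K
  let P : EuclideanSpace ℝ (Fin n) →ₗ[ℝ] EuclideanSpace ℝ (Fin n) :=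
    K.subtype ∘ₗ (K.orthogonalProjectionOnto).toLinearMap
  have hPmem : ∀ v, P v ∈ K := fun v => (K.orthogonalProjectionOnto v).2
  have hPfix : ∀ v, v ∈ K → P v = v := by
    intro v hv
    simp only [P, LinearMap.comp_apply, ContinuousLinearMap.coe_coe,
      Submodule.subtype_apply]
    exact congrArg Subtype.val
      (K.orthogonalProjectionOnto_mem_subspace_eq_self (⟨v, hv⟩ : K))
  let f : (Fin n → ℝ) →ₗ[ℝ] (Fin n → ℝ) := A.mulVecLin ∘ₗ (WithLp.linearEquiv 2 ℝ (Fin n → ℝ)).toLinearMap ∘ₗ P ∘ₗ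
    (WithLp.linearEquiv 2 ℝ (Fin n → ℝ)).symm.toLinearMap
  let Atil : Matrix (Fin n) (Fin n) ℝ := LinearMap.toMatrix' f
  have hAtil : ∀ x : Fin n → ℝ, Atil.mulVec x = A.mulVec (P (toE x)) := by
    intro x
    have : Matrix.mulVec (LinearMap.toMatrix' f) x = f x := by
      rw [← Matrix.toLin'_apply, Matrix.toLin'_toMatrix']
    exact this
  have hmemK : ∀ i < j, toE ((A ^ i).mulVec b) ∈ K := fun i hi =>
    Submodule.subset_span ⟨i, hi, rfl⟩
  have hind : indist A Atil b j := by
    intro i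
    induction i with
    | zero => intro _; simp
    | succ i ih =>
      intro hi
      have hi' : i ≤ j := Nat.le_of_succ_le hi
      rw [pow_succ', pow_succ', ← Matrix.mulVec_mulVec, ← Matrix.mulVec_mulVec,
        ih hi', hAtil]
      exact congrArg (fun v => A.mulVec (WithLp.ofLp v)) (hPfix _ (hmemK i (Nat.lt_of_succ_le hi)))
  have hres := hy Atil hind
  have hxK : P y ∈ krylov A b (j + 1) := by
    have hle : K ≤ krylov A b (j + 1) := by
      apply Submodule.span_mono
      rintro v ⟨i, hi, rfl⟩
      exact ⟨i, Nat.lt_succ_of_lt hi, rfl⟩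
    exact hle (hPmem y)
  have hkey : ‖b - toE (A.mulVec (P y))‖ ≤ ε * ‖b‖ := by
    have : toE (Atil.mulVec y) = toE (A.mulVec (P y)) := congrArg toE (hAtil y)
    rwa [this] at hres
  refine ⟨⟨P y, hxK, hkey⟩, ?_⟩
  have hmem : ‖b - toE (A.mulVec (P y))‖ ∈
      {r : ℝ | ∃ x ∈ krylov A b (j + 1), r = ‖b - toE (A.mulVec x)‖} :=
    ⟨P y, hxK, rfl⟩
  have hbdd : BddBelow {r : ℝ | ∃ x ∈ krylov A b (j + 1),
      r = ‖b - toE (A.mulVec x)‖} := by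
    refine ⟨0, ?_⟩
    rintro r ⟨x, -, rfl⟩
    exact norm_nonneg _
  exact le_trans (csInf_le hbdd hmem) hkey
end
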